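/- arXiv:1411.5503 — 3 statements merged into one kernel-verified Lean document; each statement's English description precedes it below -/
import Mathlib

section
/- Let μ : (0,∞) → ℝ be twice continuously differentiable and let φ : (0,∞) → ℝ satisfy φ'(s) = μ(s)/s² for all s > 0. Let γ > 1, let Ω ⊆ ℝ² be open with coordinates (t,x), and let ρ, u : Ω → ℝ be twice continuously differentiable with ρ > 0 on Ω, satisfying on Ω the 1D compressible Navier–Stokes system ∂_t ρ + ∂_x(ρu) = 0 and ∂_t(ρu) + ∂_x(ρu²) − ∂_x(μ(ρ)∂_x u) + ∂_x(ρ^γ) = 0. Define the effective velocity v = u + φ'(ρ)∂_x ρ. Then on Ω one has ∂_t ρ − ∂_x((μ(ρ)/ρ)∂_x ρ) + ∂_x(ρv) = 0 and ρ ∂_t v + ρ u ∂_x v + ∂_x(ρ^γ) = 0. -/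
/-!
Write `ψ = φ ∘ ρ`, so that `v = u + ∂ₓψ` and `ρ ∂ₓψ = (μ(ρ)/ρ) ∂ₓρ`: the first equation is the mass
equation in disguise. For the second, let `D = ∂ₜ + u ∂ₓ`. By the mass equation
`D ψ = -ρ φ'(ρ) ∂ₓu`; differentiating in `x` and commuting `∂ₜ` with `∂ₓ` gives
`ρ D(∂ₓψ) = -∂ₓ(ρ² φ'(ρ) ∂ₓu) = -∂ₓ(μ(ρ) ∂ₓu)`. The momentum equation minus `u` times the mass
equation reads `ρ D u = ∂ₓ(μ(ρ) ∂ₓu) - ∂ₓ(ρ^γ)`, and adding the two cancels the viscous terms.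
-/

open Real Set

/-- Partial derivative with respect to the first variable (time). -/
noncomputable def pdt (f : ℝ × ℝ → ℝ) (z : ℝ × ℝ) : ℝ := deriv (fun s => f (s, z.2)) z.1

/-- Partial derivative with respect to the second variable (space). -/
noncomputable def pdx (f : ℝ × ℝ → ℝ) (z : ℝ × ℝ) : ℝ := deriv (fun y => f (z.1, y)) z.2

open Filter Topology

section PartialDerivatives

variable {f g : ℝ × ℝ → ℝ} {z : ℝ × ℝ}

theorem HasFDerivAt.pdt_eq {L : ℝ × ℝ →L[ℝ] ℝ} (hf : HasFDerivAt f L z) : pdt f z = L (1, 0) :=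
  (hf.comp_hasDerivAt z.1 ((hasDerivAt_id z.1).prodMk (hasDerivAt_const z.1 z.2))).deriv

theorem HasFDerivAt.pdx_eq {L : ℝ × ℝ →L[ℝ] ℝ} (hf : HasFDerivAt f L z) : pdx f z = L (0, 1) :=
  (hf.comp_hasDerivAt z.2 ((hasDerivAt_const z.2 z.1).prodMk (hasDerivAt_id z.2))).deriv

theorem pdt_congr (h : f =ᶠ[𝓝 z] g) : pdt f z = pdt g z :=
  EventuallyEq.deriv_eq <| h.comp_tendsto <|
    (continuous_id.prodMk continuous_const).tendsto' z.1 z rfl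

theorem pdx_congr (h : f =ᶠ[𝓝 z] g) : pdx f z = pdx g z :=
  EventuallyEq.deriv_eq <| h.comp_tendsto <|
    (continuous_const.prodMk continuous_id).tendsto' z.2 z rfl

theorem pdx_eq_zero_of_eventuallyEq_zero (h : f =ᶠ[𝓝 z] 0) : pdx f z = 0 :=
  (pdx_congr h).trans (deriv_const _ _)

theorem pdt_add (hf : DifferentiableAt ℝ f z) (hg : DifferentiableAt ℝ g z) :
    pdt (fun q => f q + g q) z = pdt f z + pdt g z :=
  (hf.hasFDerivAt.add hg.hasFDerivAt).pdt_eq.trans <| by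
    simp [hf.hasFDerivAt.pdt_eq, hg.hasFDerivAt.pdt_eq]

theorem pdx_add (hf : DifferentiableAt ℝ f z) (hg : DifferentiableAt ℝ g z) :
    pdx (fun q => f q + g q) z = pdx f z + pdx g z :=
  (hf.hasFDerivAt.add hg.hasFDerivAt).pdx_eq.trans <| by
    simp [hf.hasFDerivAt.pdx_eq, hg.hasFDerivAt.pdx_eq]

theorem pdt_mul (hf : DifferentiableAt ℝ f z) (hg : DifferentiableAt ℝ g z) :
    pdt (fun q => f q * g q) z = pdt f z * g z + f z * pdt g z := by
  have hfg : HasFDerivAt (fun q => f q * g q) _ z := hf.hasFDerivAt.mul hg.hasFDerivAt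
  rw [hfg.pdt_eq, hf.hasFDerivAt.pdt_eq, hg.hasFDerivAt.pdt_eq]
  simp only [add_apply, smul_apply, smul_eq_mul]
  ring

theorem pdx_mul (hf : DifferentiableAt ℝ f z) (hg : DifferentiableAt ℝ g z) :
    pdx (fun q => f q * g q) z = pdx f z * g z + f z * pdx g z := by
  have hfg : HasFDerivAt (fun q => f q * g q) _ z := hf.hasFDerivAt.mul hg.hasFDerivAt
  rw [hfg.pdx_eq, hf.hasFDerivAt.pdx_eq, hg.hasFDerivAt.pdx_eq]
  simp only [add_apply, smul_apply, smul_eq_mul]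
  ring

theorem pdt_comp {φ : ℝ → ℝ} (hφ : DifferentiableAt ℝ φ (f z)) (hf : DifferentiableAt ℝ f z) :
    pdt (fun q => φ (f q)) z = deriv φ (f z) * pdt f z := by
  have hφf : HasFDerivAt (fun q => φ (f q)) _ z := hφ.hasDerivAt.comp_hasFDerivAt z hf.hasFDerivAt
  rw [hφf.pdt_eq, hf.hasFDerivAt.pdt_eq]
  simp

theorem pdx_comp {φ : ℝ → ℝ} (hφ : DifferentiableAt ℝ φ (f z)) (hf : DifferentiableAt ℝ f z) :
    pdx (fun q => φ (f q)) z = deriv φ (f z) * pdx f z := by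
  have hφf : HasFDerivAt (fun q => φ (f q)) _ z := hφ.hasDerivAt.comp_hasFDerivAt z hf.hasFDerivAt
  rw [hφf.pdx_eq, hf.hasFDerivAt.pdx_eq]
  simp

theorem contDiffAt_pdt {m n : WithTop ℕ∞} (hf : ContDiffAt ℝ n f z) (hmn : m + 1 ≤ n) :
    ContDiffAt ℝ m (pdt f) z := by
  refine ((hf.fderiv_right hmn).clm_apply (contDiffAt_const (c := ((1 : ℝ), (0 : ℝ)))))
    |>.congr_of_eventuallyEq ?_
  filter_upwards [(hf.of_le (le_add_self.trans hmn)).eventually (by simp)] with q hq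
  exact (hq.differentiableAt one_ne_zero).hasFDerivAt.pdt_eq

theorem contDiffAt_pdx {m n : WithTop ℕ∞} (hf : ContDiffAt ℝ n f z) (hmn : m + 1 ≤ n) :
    ContDiffAt ℝ m (pdx f) z := by
  refine ((hf.fderiv_right hmn).clm_apply (contDiffAt_const (c := ((0 : ℝ), (1 : ℝ)))))
    |>.congr_of_eventuallyEq ?_
  filter_upwards [(hf.of_le (le_add_self.trans hmn)).eventually (by simp)] with q hq
  exact (hq.differentiableAt one_ne_zero).hasFDerivAt.pdx_eq

theorem ContDiffAt.differentiableAt_pdt (hf : ContDiffAt ℝ 2 f z) :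
    DifferentiableAt ℝ (pdt f) z :=
  (contDiffAt_pdt hf (m := 1) (by norm_num)).differentiableAt one_ne_zero

theorem ContDiffAt.differentiableAt_pdx (hf : ContDiffAt ℝ 2 f z) :
    DifferentiableAt ℝ (pdx f) z :=
  (contDiffAt_pdx hf (m := 1) (by norm_num)).differentiableAt one_ne_zero

theorem pdt_pdx_comm (hf : ContDiffAt ℝ 2 f z) : pdt (pdx f) z = pdx (pdt f) z := by
  have hf' : HasFDerivAt (fderiv ℝ f) (fderiv ℝ (fderiv ℝ f) z) z :=
    ((hf.fderiv_right (m := 1) (by norm_num)).differentiableAt one_ne_zero).hasFDerivAt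
  have hev : ∀ᶠ q in 𝓝 z, HasFDerivAt f (fderiv ℝ f q) q := by
    filter_upwards [(hf.of_le one_le_two).eventually (by simp)] with q hq
    exact (hq.differentiableAt one_ne_zero).hasFDerivAt
  have hpdx : pdx f =ᶠ[𝓝 z] fun q => fderiv ℝ f q (0, 1) := hev.mono fun q hq => hq.pdx_eq
  have hpdt : pdt f =ᶠ[𝓝 z] fun q => fderiv ℝ f q (1, 0) := hev.mono fun q hq => hq.pdt_eq
  rw [pdt_congr hpdx, pdx_congr hpdt, (hf'.clm_apply (hasFDerivAt_const _ z)).pdt_eq,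
    (hf'.clm_apply (hasFDerivAt_const _ z)).pdx_eq]
  simpa using hf.isSymmSndFDerivAt (by simp) (1, 0) (0, 1)

end PartialDerivatives

theorem contDiffOn_succ_of_hasDerivAt {φ φ' : ℝ → ℝ} {s : Set ℝ} {n : ℕ} (hs : IsOpen s)
    (hφ : ∀ x ∈ s, HasDerivAt φ (φ' x) x) (hφ' : ContDiffOn ℝ n φ' s) :
    ContDiffOn ℝ (n + 1) φ s := by
  rw [contDiffOn_succ_iff_deriv_of_isOpen hs]
  exact ⟨fun x hx => (hφ x hx).differentiableAt.differentiableWithinAt, by simp,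
    hφ'.congr fun x hx => (hφ x hx).deriv⟩

section EffectiveVelocity

variable {φ : ℝ → ℝ} {ρ u : ℝ × ℝ → ℝ} {z : ℝ × ℝ}

theorem effective_mass_equation {μ : ℝ → ℝ} {v : ℝ × ℝ → ℝ} (hμ : DifferentiableAt ℝ μ (ρ z))
    (hρ : ContDiffAt ℝ 2 ρ z) (hu : DifferentiableAt ℝ u z) (hρz : ρ z ≠ 0)
    (hmass : pdt ρ z + pdx (fun q => ρ q * u q) z = 0)
    (hv : (fun q => ρ q * v q) =ᶠ[𝓝 z] fun q => ρ q * u q + μ (ρ q) / ρ q * pdx ρ q) :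
    pdt ρ z - pdx (fun q => μ (ρ q) / ρ q * pdx ρ q) z + pdx (fun q => ρ q * v q) z = 0 := by
  have hρd := hρ.differentiableAt two_ne_zero
  have hρx := hρ.differentiableAt_pdx
  have hdiffusion : DifferentiableAt ℝ (fun q => μ (ρ q) / ρ q * pdx ρ q) z := by
    fun_prop (disch := assumption)
  rw [pdx_congr hv, pdx_add (hρd.fun_mul hu) hdiffusion]
  linear_combination hmass

noncomputable def materialDeriv (u f : ℝ × ℝ → ℝ) (z : ℝ × ℝ) : ℝ := pdt f z + u z * pdx f z

theorem materialDeriv_comp_of_mass (hφ : DifferentiableAt ℝ φ (ρ z))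
    (hρ : DifferentiableAt ℝ ρ z) (hu : DifferentiableAt ℝ u z)
    (hmass : pdt ρ z + pdx (fun q => ρ q * u q) z = 0) :
    materialDeriv u (fun q => φ (ρ q)) z + deriv φ (ρ z) * ρ z * pdx u z = 0 := by
  rw [materialDeriv, pdt_comp hφ hρ, pdx_comp hφ hρ]
  rw [pdx_mul hρ hu] at hmass
  linear_combination deriv φ (ρ z) * hmass

theorem momentum_eq_mul_materialDeriv_of_mass (hρ : DifferentiableAt ℝ ρ z)
    (hu : DifferentiableAt ℝ u z) (hmass : pdt ρ z + pdx (fun q => ρ q * u q) z = 0) :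
    pdt (fun q => ρ q * u q) z + pdx (fun q => ρ q * u q ^ 2) z = ρ z * materialDeriv u u z := by
  have hsq : (fun q => ρ q * u q ^ 2) = fun q => ρ q * u q * u q := by
    funext q
    ring
  rw [hsq, pdx_mul (hρ.fun_mul hu) hu, pdt_mul hρ hu, materialDeriv]
  linear_combination u z * hmass

theorem mul_materialDeriv_pdx_comp_of_mass (hφ : ContDiffAt ℝ 2 φ (ρ z))
    (hρ : ContDiffAt ℝ 2 ρ z) (hu : ContDiffAt ℝ 2 u z)
    (hmass : ∀ᶠ q in 𝓝 z, pdt ρ q + pdx (fun p => ρ p * u p) q = 0) :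
    ρ z * materialDeriv u (pdx fun q => φ (ρ q)) z
      + pdx (fun q => ρ q ^ 2 * deriv φ (ρ q) * pdx u q) z = 0 := by
  set ψ := fun q => φ (ρ q) with hψ_def
  have hψ : ContDiffAt ℝ 2 ψ z := hφ.comp z hρ
  have hρd := hρ.differentiableAt two_ne_zero
  have hud := hu.differentiableAt two_ne_zero
  have hux := hu.differentiableAt_pdx
  have hψt := hψ.differentiableAt_pdt
  have hψx := hψ.differentiableAt_pdx
  -- `deriv φ` is `fun s => fderiv ℝ φ s 1` by definition
  have hφ' : DifferentiableAt ℝ (deriv φ) (ρ z) :=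
    ((hφ.fderiv_right (m := 1) (by norm_num)).clm_apply contDiffAt_const).differentiableAt
      one_ne_zero
  have ha : DifferentiableAt ℝ (fun q => deriv φ (ρ q) * ρ q * pdx u q) z := by fun_prop
  have htransport : (fun q => pdt ψ q + u q * pdx ψ q + deriv φ (ρ q) * ρ q * pdx u q)
      =ᶠ[𝓝 z] 0 := by
    filter_upwards [hmass, hρ.continuousAt.eventually ((hφ.eventually (by simp))),
      hρ.eventually (by simp), hu.eventually (by simp)] with q hmq hφq hρq huq
    exact materialDeriv_comp_of_mass (hφq.differentiableAt two_ne_zero)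
      (hρq.differentiableAt two_ne_zero) (huq.differentiableAt two_ne_zero) hmq
  have hx := pdx_eq_zero_of_eventuallyEq_zero htransport
  rw [pdx_add (hψt.fun_add (hud.fun_mul hψx)) ha, pdx_add hψt (hud.fun_mul hψx), pdx_mul hud hψx,
    hψ_def, pdx_comp (hφ.differentiableAt two_ne_zero) hρd] at hx
  have hflux : (fun q => ρ q ^ 2 * deriv φ (ρ q) * pdx u q)
      = fun q => ρ q * (deriv φ (ρ q) * ρ q * pdx u q) := by
    funext q
    ring
  rw [hflux, pdx_mul hρd ha, materialDeriv, pdt_pdx_comm hψ]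
  linear_combination ρ z * hx

theorem effective_momentum_equation {v P : ℝ × ℝ → ℝ}
    (hφ : ContDiffAt ℝ 2 φ (ρ z)) (hρ : ContDiffAt ℝ 2 ρ z) (hu : ContDiffAt ℝ 2 u z)
    (hmass : ∀ᶠ q in 𝓝 z, pdt ρ q + pdx (fun p => ρ p * u p) q = 0)
    (hmom : pdt (fun q => ρ q * u q) z + pdx (fun q => ρ q * u q ^ 2) z
      - pdx (fun q => ρ q ^ 2 * deriv φ (ρ q) * pdx u q) z + pdx P z = 0)
    (hv : v =ᶠ[𝓝 z] fun q => u q + pdx (fun p => φ (ρ p)) q) :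
    ρ z * materialDeriv u v z + pdx P z = 0 := by
  have hud := hu.differentiableAt two_ne_zero
  have hψx : DifferentiableAt ℝ (pdx fun q => φ (ρ q)) z := (hφ.comp z hρ).differentiableAt_pdx
  have hsplit : materialDeriv u v z
      = materialDeriv u u z + materialDeriv u (pdx fun q => φ (ρ q)) z := by
    simp only [materialDeriv]
    rw [pdt_congr hv, pdx_congr hv, pdt_add hud hψx, pdx_add hud hψx]
    ring
  rw [momentum_eq_mul_materialDeriv_of_mass (hρ.differentiableAt two_ne_zero) hud
    hmass.self_of_nhds] at hmom
  rw [hsplit]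
  linear_combination hmom + mul_materialDeriv_pdx_comp_of_mass hφ hρ hu hmass

end EffectiveVelocity

theorem stmt_0_general (μ φ : ℝ → ℝ) (γ : ℝ) (Ω : Set (ℝ × ℝ)) (ρ u v : ℝ × ℝ → ℝ)
    (hμ : ContDiffOn ℝ 2 μ (Set.Ioi 0))
    (hφ : ∀ s : ℝ, 0 < s → HasDerivAt φ (μ s / s ^ 2) s)
    (hΩ : IsOpen Ω)
    (hρC : ContDiffOn ℝ 2 ρ Ω) (huC : ContDiffOn ℝ 2 u Ω)
    (hρpos : ∀ z ∈ Ω, 0 < ρ z)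
    (hmass : ∀ z ∈ Ω, pdt ρ z + pdx (fun q => ρ q * u q) z = 0)
    (hmom : ∀ z ∈ Ω,
      pdt (fun q => ρ q * u q) z + pdx (fun q => ρ q * u q ^ 2) z
        - pdx (fun q => μ (ρ q) * pdx u q) z + pdx (fun q => ρ q ^ γ) z = 0)
    (hv : ∀ q, v q = u q + deriv φ (ρ q) * pdx ρ q) :
    ∀ z ∈ Ω,
      (pdt ρ z - pdx (fun q => μ (ρ q) / ρ q * pdx ρ q) z
          + pdx (fun q => ρ q * v q) z = 0)
      ∧ (ρ z * pdt v z + ρ z * u z * pdx v z + pdx (fun q => ρ q ^ γ) z = 0) := by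
  intro z hz
  have hΩz : Ω ∈ 𝓝 z := hΩ.mem_nhds hz
  have hρ := hρC.contDiffAt hΩz
  have hu := huC.contDiffAt hΩz
  have hρz : ρ z ∈ Ioi 0 := hρpos z hz
  have hφC : ContDiffOn ℝ 2 φ (Ioi 0) :=
    contDiffOn_succ_of_hasDerivAt (n := 1) isOpen_Ioi hφ
      ((hμ.of_le one_le_two).div (contDiffOn_id.pow 2) fun s hs => pow_ne_zero 2 (ne_of_gt hs))
  have hφ' : ∀ᶠ q in 𝓝 z, ρ q ≠ 0 ∧ deriv φ (ρ q) = μ (ρ q) / ρ q ^ 2 := by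
    filter_upwards [hΩz] with q hq
    exact ⟨(hρpos q hq).ne', (hφ _ (hρpos q hq)).deriv⟩
  have hρv : (fun q => ρ q * v q) =ᶠ[𝓝 z] fun q => ρ q * u q + μ (ρ q) / ρ q * pdx ρ q := by
    filter_upwards [hφ'] with q ⟨hρq, hφq⟩
    rw [hv, hφq]
    field_simp
  have hflux : (fun q => μ (ρ q) * pdx u q) =ᶠ[𝓝 z]
      fun q => ρ q ^ 2 * deriv φ (ρ q) * pdx u q := by
    filter_upwards [hφ'] with q ⟨hρq, hφq⟩
    rw [hφq]
    field_simp
  have hvψ : v =ᶠ[𝓝 z] fun q => u q + pdx (fun p => φ (ρ p)) q := by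
    filter_upwards [hΩz] with q hq
    rw [hv, pdx_comp (hφ _ (hρpos q hq)).differentiableAt
      ((hρC.contDiffAt (hΩ.mem_nhds hq)).differentiableAt two_ne_zero)]
  refine ⟨effective_mass_equation
    ((hμ.contDiffAt (Ioi_mem_nhds hρz)).differentiableAt two_ne_zero) hρ
    (hu.differentiableAt two_ne_zero) (ne_of_gt hρz) (hmass z hz) hρv, ?_⟩
  have key := effective_momentum_equation (hφC.contDiffAt (Ioi_mem_nhds hρz)) hρ hu
    (eventually_of_mem hΩz hmass) (pdx_congr hflux ▸ hmom z hz) hvψ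
  rw [materialDeriv] at key
  linear_combination key

theorem stmt_0 (μ φ : ℝ → ℝ) (γ : ℝ) (Ω : Set (ℝ × ℝ)) (ρ u v : ℝ × ℝ → ℝ)
    (hμ : ContDiffOn ℝ 2 μ (Set.Ioi 0))
    (hφ : ∀ s : ℝ, 0 < s → HasDerivAt φ (μ s / s ^ 2) s)
    (hγ : 1 < γ) (hΩ : IsOpen Ω)
    (hρC : ContDiffOn ℝ 2 ρ Ω) (huC : ContDiffOn ℝ 2 u Ω)
    (hρpos : ∀ z ∈ Ω, 0 < ρ z)
    (hmass : ∀ z ∈ Ω, pdt ρ z + pdx (fun q => ρ q * u q) z = 0)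
    (hmom : ∀ z ∈ Ω,
      pdt (fun q => ρ q * u q) z + pdx (fun q => ρ q * u q ^ 2) z
        - pdx (fun q => μ (ρ q) * pdx u q) z + pdx (fun q => ρ q ^ γ) z = 0)
    (hv : ∀ q, v q = u q + deriv φ (ρ q) * pdx ρ q) :
    ∀ z ∈ Ω,
      (pdt ρ z - pdx (fun q => μ (ρ q) / ρ q * pdx ρ q) z
          + pdx (fun q => ρ q * v q) z = 0)
      ∧ (ρ z * pdt v z + ρ z * u z * pdx v z + pdx (fun q => ρ q ^ γ) z = 0) :=
  stmt_0_general μ φ γ Ω ρ u v hμ hφ hΩ hρC huC hρpos hmass hmom hv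
end

section
/- Let α ∈ ℝ, Ω ⊆ ℝ² open, ρ : Ω → ℝ twice continuously differentiable with ρ > 0 on Ω, and v : Ω → ℝ continuously differentiable, such that on Ω: ∂_t ρ − ∂_x(ρ^{α−1} ∂_x ρ) + ∂_x(ρ v) = 0. Then on Ω the reciprocal density satisfies ∂_t(1/ρ) − ∂_x(ρ^{α−1} ∂_x(1/ρ)) + 2 ρ^α (∂_x(1/ρ))² + 2 v ∂_x(1/ρ) − ∂_x(v/ρ) = 0. -/
open Real Set

/-!
With `w = 1/ρ` one has `∂ₜw = -∂ₜρ/ρ²` and `ρ^(α-1) ∂ₓw = -(ρ^(α-1) ∂ₓρ)/ρ²` near each point,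
so every term of the equation for `w` is a rational expression in `ρ`, `v`, their first
derivatives and `∂ₓ(ρ^(α-1) ∂ₓρ)`. The flux `ρ^(α-1) ∂ₓρ` never has to be differentiated
explicitly: it appears as the same atom in the mass equation, which eliminates `∂ₜρ`, after
which the identity is algebraic.
-/

open Filter Topology

section PartialDerivatives

variable {f g : ℝ × ℝ → ℝ} {z : ℝ × ℝ}

theorem DifferentiableAt.comp_slice_fst (hf : DifferentiableAt ℝ f z) :
    DifferentiableAt ℝ (fun s => f (s, z.2)) z.1 :=
  (show DifferentiableAt ℝ f (z.1, z.2) from hf).comp z.1 (by fun_prop)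

theorem DifferentiableAt.comp_slice_snd (hf : DifferentiableAt ℝ f z) :
    DifferentiableAt ℝ (fun y => f (z.1, y)) z.2 :=
  (show DifferentiableAt ℝ f (z.1, z.2) from hf).comp z.2 (by fun_prop)

theorem pdx_eq_fderiv (hf : DifferentiableAt ℝ f z) : pdx f z = fderiv ℝ f z (0, 1) := by
  have hslice : HasDerivAt (fun y : ℝ => (z.1, y)) (0, 1) z.2 :=
    (hasDerivAt_const _ _).prodMk (hasDerivAt_id _)
  exact ((show DifferentiableAt ℝ f (z.1, z.2) from hf).hasFDerivAt.comp_hasDerivAt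
    z.2 hslice).deriv

theorem ContDiffOn.pdx_of_isOpen {s : Set (ℝ × ℝ)} {n : WithTop ℕ∞}
    (hf : ContDiffOn ℝ (n + 1) f s) (hs : IsOpen s) : ContDiffOn ℝ n (pdx f) s := by
  have hfderiv : ContDiffOn ℝ n (fun q => fderiv ℝ f q (0, 1)) s :=
    (hf.fderiv_of_isOpen hs le_rfl).clm_apply contDiffOn_const
  refine hfderiv.congr fun q hq => ?_
  exact pdx_eq_fderiv ((hf.differentiableOn (by simp)).differentiableAt (hs.mem_nhds hq))

theorem pdx_neg : pdx (fun q => -f q) z = -pdx f z :=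
  deriv.neg

theorem pdx_pow (hf : DifferentiableAt ℝ f z) (n : ℕ) :
    pdx (fun q => f q ^ n) z = n * f z ^ (n - 1) * pdx f z :=
  deriv_pow hf.comp_slice_snd n

theorem pdx_inv (hf : DifferentiableAt ℝ f z) (hz : f z ≠ 0) :
    pdx (fun q => (f q)⁻¹) z = -pdx f z / f z ^ 2 :=
  deriv_inv'' hf.comp_slice_snd hz

theorem pdx_div (hf : DifferentiableAt ℝ f z) (hg : DifferentiableAt ℝ g z) (hz : g z ≠ 0) :
    pdx (fun q => f q / g q) z = (pdx f z * g z - f z * pdx g z) / g z ^ 2 :=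
  deriv_div hf.comp_slice_snd hg.comp_slice_snd hz

theorem pdt_inv (hf : DifferentiableAt ℝ f z) (hz : f z ≠ 0) :
    pdt (fun q => (f q)⁻¹) z = -pdt f z / f z ^ 2 :=
  deriv_inv'' hf.comp_slice_fst hz

end PartialDerivatives

theorem stmt_2 (α : ℝ) (Ω : Set (ℝ × ℝ)) (ρ v : ℝ × ℝ → ℝ)
    (hΩ : IsOpen Ω)
    (hρC : ContDiffOn ℝ 2 ρ Ω) (hvC : ContDiffOn ℝ 1 v Ω)
    (hρpos : ∀ z ∈ Ω, 0 < ρ z)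
    (hmass : ∀ z ∈ Ω,
      pdt ρ z - pdx (fun q => ρ q ^ (α - 1) * pdx ρ q) z
        + pdx (fun q => ρ q * v q) z = 0) :
    ∀ z ∈ Ω,
      pdt (fun q => (ρ q)⁻¹) z
        - pdx (fun q => ρ q ^ (α - 1) * pdx (fun r => (ρ r)⁻¹) q) z
        + 2 * ρ z ^ α * (pdx (fun q => (ρ q)⁻¹) z) ^ 2
        + 2 * v z * pdx (fun q => (ρ q)⁻¹) z
        - pdx (fun q => v q / ρ q) z = 0 := by
  intro z hz
  have hρ : ∀ q ∈ Ω, DifferentiableAt ℝ ρ q := fun q hq =>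
    (hρC.differentiableOn (by norm_num)).differentiableAt (hΩ.mem_nhds hq)
  have hv : DifferentiableAt ℝ v z :=
    (hvC.differentiableOn one_ne_zero).differentiableAt (hΩ.mem_nhds hz)
  have hρz : ρ z ≠ 0 := (hρpos z hz).ne'
  have hflux : DifferentiableAt ℝ (fun q => ρ q ^ (α - 1) * pdx ρ q) z :=
    ((hρ z hz).rpow_const (Or.inl hρz)).mul <|
      ((hρC.pdx_of_isOpen (n := 1) hΩ).differentiableOn one_ne_zero).differentiableAt
        (hΩ.mem_nhds hz)
  have hvisc : pdx (fun q => ρ q ^ (α - 1) * pdx (fun r => (ρ r)⁻¹) q) z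
      = pdx (fun q => -(ρ q ^ (α - 1) * pdx ρ q) / ρ q ^ 2) z := by
    refine pdx_congr ?_
    filter_upwards [hΩ.mem_nhds hz] with q hq
    rw [pdx_inv (hρ q hq) (hρpos q hq).ne']
    ring
  have hmass_z := hmass z hz
  rw [pdx_mul (hρ z hz) hv] at hmass_z
  rw [hvisc, pdx_div (f := fun q => -(ρ q ^ (α - 1) * pdx ρ q)) (g := fun q => ρ q ^ 2)
    hflux.neg ((hρ z hz).pow 2) (pow_ne_zero 2 hρz), pdx_neg, pdx_pow (hρ z hz),
    pdt_inv (hρ z hz) hρz, pdx_inv (hρ z hz) hρz, pdx_div hv (hρ z hz) hρz,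
    Real.rpow_sub_one hρz]
  field_simp
  linear_combination -ρ z ^ 3 * hmass_z
end

section
/- Let 1 < q < 2 and let w : ℝ → ℝ be differentiable at every point, with w square-integrable on ℝ. Suppose there exist functions f, g : ℝ → ℝ with f square-integrable on ℝ and g ∈ L^q(ℝ), such that the derivative of w equals f + g at every point. Then w is bounded on ℝ. -/
/-!
On a set of measure at most one, Hölder bounds the `L¹` norm by the `Lᵖ` norm for every `p ≥ 1`.
Hence `w` and `w' = f + g` have `L¹` norm at most `‖w‖₂` and `‖f‖₂ + ‖g‖_q` on every unit interval
`(x, x + 1]`. Since `|w|` lies below its mean somewhere on that interval, some `y` there has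
`|w y| ≤ ‖w‖₂`, and the fundamental theorem of calculus gives `|w x - w y| ≤ ‖f‖₂ + ‖g‖_q`.
-/

open Real MeasureTheory Set
open scoped ENNReal

namespace MeasureTheory

variable {α E : Type*} [MeasurableSpace α] [NormedAddCommGroup E] {μ : Measure α} {s : Set α}
  {p : ℝ≥0∞} {f : α → E}

theorem eLpNorm_one_restrict_le_eLpNorm (hp : 1 ≤ p) (hs : μ s ≤ 1)
    (hf : AEStronglyMeasurable f μ) : eLpNorm f 1 (μ.restrict s) ≤ eLpNorm f p μ := by
  have hexp : 0 ≤ 1 / (1 : ℝ≥0∞).toReal - 1 / p.toReal := by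
    rw [ENNReal.toReal_one, div_one, sub_nonneg]
    rcases eq_or_ne p ⊤ with rfl | hp_top
    · simp
    · exact div_le_one_of_le₀ (by simpa using ENNReal.toReal_mono hp_top hp) ENNReal.toReal_nonneg
  calc eLpNorm f 1 (μ.restrict s)
      ≤ eLpNorm f p (μ.restrict s) * μ.restrict s univ ^ (1 / (1 : ℝ≥0∞).toReal - 1 / p.toReal) :=
        eLpNorm_le_eLpNorm_mul_rpow_measure_univ hp hf.restrict
    _ ≤ eLpNorm f p (μ.restrict s) * 1 := by
        rw [Measure.restrict_apply_univ]
        gcongr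
        exact ENNReal.rpow_le_one hs hexp
    _ ≤ eLpNorm f p μ := by
        rw [mul_one]
        exact eLpNorm_restrict_le f p μ s

theorem MemLp.integrableOn_of_measure_le_one (hf : MemLp f p μ) (hp : 1 ≤ p) (hs : μ s ≤ 1) :
    IntegrableOn f s μ :=
  memLp_one_iff_integrable.1 ⟨hf.1.restrict,
    (eLpNorm_one_restrict_le_eLpNorm hp hs hf.1).trans_lt hf.eLpNorm_lt_top⟩

theorem MemLp.setIntegral_norm_le_of_measure_le_one (hf : MemLp f p μ) (hp : 1 ≤ p)
    (hs : μ s ≤ 1) : ∫ a in s, ‖f a‖ ∂μ ≤ (eLpNorm f p μ).toReal := by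
  rw [integral_norm_eq_lintegral_enorm hf.1.restrict, ← eLpNorm_one_eq_lintegral_enorm]
  exact ENNReal.toReal_mono hf.eLpNorm_ne_top (eLpNorm_one_restrict_le_eLpNorm hp hs hf.1)

end MeasureTheory

section UnitInterval

variable {E : Type*} [NormedAddCommGroup E] {w : ℝ → E}

theorem exists_mem_Ioc_norm_le_setIntegral_norm (hw : Continuous w) (x : ℝ) :
    ∃ y ∈ Ioc x (x + 1), ‖w y‖ ≤ ∫ t in Ioc x (x + 1), ‖w t‖ := by
  have hvol : volume (Ioc x (x + 1)) = 1 := by simp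
  obtain ⟨y, hy, hle⟩ := exists_le_setAverage (μ := volume) (s := Ioc x (x + 1))
    (by simp [hvol]) (by simp [hvol]) hw.norm.integrableOn_Ioc
  refine ⟨y, hy, hle.trans_eq ?_⟩
  rw [setAverage_eq, measureReal_def, hvol, ENNReal.toReal_one, inv_one, one_smul]

variable [NormedSpace ℝ E] [CompleteSpace E]

theorem norm_sub_le_setIntegral_norm_deriv (hw : Differentiable ℝ w) {x y : ℝ}
    (hy : y ∈ Ioc x (x + 1)) (hint : IntegrableOn (deriv w) (Ioc x (x + 1))) :
    ‖w y - w x‖ ≤ ∫ t in Ioc x (x + 1), ‖deriv w t‖ := by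
  have hsub : Ioc x y ⊆ Ioc x (x + 1) := Ioc_subset_Ioc_right hy.2
  have hii : IntervalIntegrable (deriv w) volume x y :=
    (intervalIntegrable_iff_integrableOn_Ioc_of_le hy.1.le).2 (hint.mono_set hsub)
  calc ‖w y - w x‖ = ‖∫ t in x..y, deriv w t‖ := by
        rw [intervalIntegral.integral_eq_sub_of_hasDerivAt (fun t _ ↦ (hw t).hasDerivAt) hii]
    _ ≤ ∫ t in Ioc x y, ‖deriv w t‖ := by
        rw [intervalIntegral.integral_of_le hy.1.le]
        exact norm_integral_le_integral_norm _
    _ ≤ ∫ t in Ioc x (x + 1), ‖deriv w t‖ :=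
        setIntegral_mono_set hint.norm (.of_forall fun _ ↦ norm_nonneg _) hsub.eventuallyLE

theorem norm_le_of_setIntegral_norm_Ioc_le (hw : Differentiable ℝ w) {x A B : ℝ}
    (hwA : ∫ t in Ioc x (x + 1), ‖w t‖ ≤ A) (hint : IntegrableOn (deriv w) (Ioc x (x + 1)))
    (hwB : ∫ t in Ioc x (x + 1), ‖deriv w t‖ ≤ B) : ‖w x‖ ≤ A + B := by
  obtain ⟨y, hy, hwy⟩ := exists_mem_Ioc_norm_le_setIntegral_norm hw.continuous x
  calc ‖w x‖ ≤ ‖w y‖ + ‖w y - w x‖ := norm_le_insert _ _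
    _ ≤ A + B := add_le_add (hwy.trans hwA)
        ((norm_sub_le_setIntegral_norm_deriv hw hy hint).trans hwB)

end UnitInterval

theorem stmt_14_general (q : ℝ) (hq1 : 1 < q) (w f g : ℝ → ℝ)
    (hw : Differentiable ℝ w)
    (hw2 : MemLp w 2 (volume : Measure ℝ))
    (hf : MemLp f 2 (volume : Measure ℝ))
    (hg : MemLp g (ENNReal.ofReal q) (volume : Measure ℝ))
    (hderiv : ∀ x, deriv w x = f x + g x) :
    ∃ M : ℝ, ∀ x : ℝ, |w x| ≤ M := by
  have hq : 1 ≤ ENNReal.ofReal q := ENNReal.one_le_ofReal.2 hq1.le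
  refine ⟨(eLpNorm w 2 volume).toReal +
    ((eLpNorm f 2 volume).toReal + (eLpNorm g (ENNReal.ofReal q) volume).toReal), fun x ↦ ?_⟩
  have hI : volume (Ioc x (x + 1)) ≤ 1 := by simp
  have hfI := hf.integrableOn_of_measure_le_one one_le_two hI
  have hgI := hg.integrableOn_of_measure_le_one hq hI
  have hderiv' : deriv w = f + g := funext hderiv
  rw [← Real.norm_eq_abs]
  refine norm_le_of_setIntegral_norm_Ioc_le hw
    (hw2.setIntegral_norm_le_of_measure_le_one one_le_two hI) (hderiv' ▸ hfI.add hgI) ?_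
  rw [hderiv']
  calc ∫ t in Ioc x (x + 1), ‖(f + g) t‖
      ≤ ∫ t in Ioc x (x + 1), (‖f t‖ + ‖g t‖) :=
        integral_mono (hfI.add hgI).norm (hfI.norm.add hgI.norm) fun t ↦ norm_add_le _ _
    _ = (∫ t in Ioc x (x + 1), ‖f t‖) + ∫ t in Ioc x (x + 1), ‖g t‖ :=
        integral_add hfI.norm hgI.norm
    _ ≤ _ := add_le_add (hf.setIntegral_norm_le_of_measure_le_one one_le_two hI)
        (hg.setIntegral_norm_le_of_measure_le_one hq hI)

theorem stmt_14 (q : ℝ) (hq1 : 1 < q) (hq2 : q < 2) (w f g : ℝ → ℝ)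
    (hw : Differentiable ℝ w)
    (hw2 : MemLp w 2 (volume : Measure ℝ))
    (hf : MemLp f 2 (volume : Measure ℝ))
    (hg : MemLp g (ENNReal.ofReal q) (volume : Measure ℝ))
    (hderiv : ∀ x, deriv w x = f x + g x) :
    ∃ M : ℝ, ∀ x : ℝ, |w x| ≤ M :=
  stmt_14_general q hq1 w f g hw hw2 hf hg hderiv
end
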